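/- Let (O, 𝔪) be a commutative reduced local ring, let K be its total ring of fractions (the localization of O at the multiplicative set of nonzerodivisors), and let Ō be the integral closure of O in K; identify O with its image in Ō. Then 𝔪Ō ∩ O = 𝔪, and, with lengths taken in ℕ∞, length_O(Ō/𝔪Ō) = length_O(Ō/(𝔪Ō + O)) + 1, where 𝔪Ō + O is the O-submodule of Ō generated by 𝔪Ō and the image of O. (For the local ring of a reduced curve germ this says dim Ō/(𝔪Ō + O) = |m| − 1, where |m| = dim Ō/𝔪Ō is the multiplicity.) -/

import Mathlib

/-!
Since `Ō` is integral over `O` and `O → Ō` is injective, `𝔪` lies under a maximal ideal of `Ō`,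
so `𝔪Ō ≠ Ō` and its contraction is the maximal ideal `𝔪`. Consequently the image of `O` in
`Ō/𝔪Ō` is `O/(𝔪Ō ∩ O) = O/𝔪`, a simple `O`-module, and the short exact sequence
`0 → O/𝔪 → Ō/𝔪Ō → Ō/(𝔪Ō + O) → 0` gives the length formula.
-/

/-- The length of an `R`-module `M`: the supremum of the lengths of strictly
increasing chains of submodules of `M`, valued in `ℕ∞`. -/
noncomputable def moduleLength (R M : Type*) [Ring R] [AddCommGroup M] [Module R M] : ℕ∞ :=
  ⨆ p : LTSeries (Submodule R M), (p.length : ℕ∞)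

theorem moduleLength_eq_length (R M : Type*) [Ring R] [AddCommGroup M] [Module R M] :
    moduleLength R M = Module.length R M := by
  apply WithBot.coe_injective
  rw [Module.coe_length, Order.krullDim_eq_iSup_length]
  rfl

theorem Module.length_quotient_eq_length_quotient_comap_add_length_quotient_sup_range
    {R M N : Type*} [Ring R] [AddCommGroup M] [Module R M] [AddCommGroup N] [Module R N]
    (f : M →ₗ[R] N) (q : Submodule R N) :
    Module.length R (N ⧸ q) =
      Module.length R (M ⧸ q.comap f) + Module.length R (N ⧸ q ⊔ LinearMap.range f) := by
  refine Module.length_eq_add_of_exact (q.comap f |>.mapQ q f le_rfl)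
    (Submodule.factor le_sup_left) ?_ (Submodule.factor_surjective _) ?_
  · rw [← LinearMap.ker_eq_bot, Submodule.ker_mapQ, Submodule.mkQ_map_self]
  · rw [LinearMap.exact_iff, Submodule.range_mapQ, Submodule.factor, Submodule.ker_mapQ,
      Submodule.comap_id, Submodule.map_sup, Submodule.mkQ_map_self, bot_sup_eq]

theorem Ideal.comap_map_eq_self_of_isIntegral {R S : Type*} [CommRing R] [CommRing S]
    [Algebra R S] [Algebra.IsIntegral R S] (hinj : Function.Injective (algebraMap R S))
    (m : Ideal R) [m.IsMaximal] :
    (m.map (algebraMap R S)).comap (algebraMap R S) = m :=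
  comap_map_eq_self_of_isMaximal _ <|
    (map_eq_top_iff _ hinj (algebraMap_isIntegral_iff.mpr inferInstance)).not.mpr
      ‹m.IsMaximal›.ne_top

theorem maximalIdeal_extension_contraction_and_length_general
    (O : Type*) [CommRing O] [IsLocalRing O]
    (K : Type*) [CommRing K] [Algebra O K] [IsFractionRing O K]
    (OA : Submodule O ↥(integralClosure O K))
    (hOA : OA = LinearMap.range (Algebra.linearMap O ↥(integralClosure O K))) :
    Ideal.comap (algebraMap O ↥(integralClosure O K))
        (Ideal.map (algebraMap O ↥(integralClosure O K)) (IsLocalRing.maximalIdeal O)) =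
      IsLocalRing.maximalIdeal O ∧
    moduleLength O
        (↥(integralClosure O K) ⧸
          (Ideal.map (algebraMap O ↥(integralClosure O K))
            (IsLocalRing.maximalIdeal O)).restrictScalars O) =
      moduleLength O
          (↥(integralClosure O K) ⧸
            ((Ideal.map (algebraMap O ↥(integralClosure O K))
              (IsLocalRing.maximalIdeal O)).restrictScalars O ⊔ OA)) + 1 := by
  have hinj : Function.Injective (algebraMap O (integralClosure O K)) := fun _ _ h ↦
    IsFractionRing.injective O K (congrArg Subtype.val h)
  have hcontr := Ideal.comap_map_eq_self_of_isIntegral hinj (IsLocalRing.maximalIdeal O)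
  refine ⟨hcontr, ?_⟩
  have hcontr_submodule : ((IsLocalRing.maximalIdeal O).map (algebraMap O (integralClosure O K))
      |>.restrictScalars O).comap (Algebra.linearMap O _) = IsLocalRing.maximalIdeal O := hcontr
  have : IsSimpleModule O (O ⧸ IsLocalRing.maximalIdeal O) :=
    isSimpleModule_iff_isCoatom.mpr (IsLocalRing.maximalIdeal.isMaximal O).out
  rw [hOA, moduleLength_eq_length, moduleLength_eq_length,
    Module.length_quotient_eq_length_quotient_comap_add_length_quotient_sup_range
      (Algebra.linearMap O _),
    hcontr_submodule, Module.length_eq_one, add_comm]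

/-- for a reduced local ring `(O, 𝔪)` with total ring of fractions `K`
and integral closure `Ō = integralClosure O K`, one has `𝔪Ō ∩ O = 𝔪` (expressed via
contraction of the extension of `𝔪` to `Ō`), and
`length_O(Ō/𝔪Ō) = length_O(Ō/(𝔪Ō + O)) + 1` in `ℕ∞`. -/
theorem maximalIdeal_extension_contraction_and_length
    (O : Type*) [CommRing O] [IsLocalRing O] [IsReduced O]
    (K : Type*) [CommRing K] [Algebra O K] [IsFractionRing O K]
    (OA : Submodule O ↥(integralClosure O K))
    (hOA : OA = LinearMap.range (Algebra.linearMap O ↥(integralClosure O K))) :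
    Ideal.comap (algebraMap O ↥(integralClosure O K))
        (Ideal.map (algebraMap O ↥(integralClosure O K)) (IsLocalRing.maximalIdeal O)) =
      IsLocalRing.maximalIdeal O ∧
    moduleLength O
        (↥(integralClosure O K) ⧸
          (Ideal.map (algebraMap O ↥(integralClosure O K))
            (IsLocalRing.maximalIdeal O)).restrictScalars O) =
      moduleLength O
          (↥(integralClosure O K) ⧸
            ((Ideal.map (algebraMap O ↥(integralClosure O K))
              (IsLocalRing.maximalIdeal O)).restrictScalars O ⊔ OA)) + 1 :=
  maximalIdeal_extension_contraction_and_length_general O K OA hOA
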